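/- Let d ≥ 1 be an integer, ε ∈ (0,1), and let z be a real number with z ≥ √(d/(2ε)). Let x, y ∈ {0,1}^d ⊂ ℝ^d and let H = ‖x − y‖² denote their squared Euclidean distance (equal to their Hamming distance). Then √H·(1 − ε/12) ≤ z·arcosh(1 + H/(2z²)) ≤ √H. -/

import Mathlib

/-- The inverse hyperbolic cosine. -/
noncomputable def arcosh (x : ℝ) : ℝ := Real.log (x + Real.sqrt (x ^ 2 - 1))

/-!
Since `cosh (2a) = 1 + 2 sinh² a`, we have `arcosh (1 + 2v²) = 2 arsinh v` for `v ≥ 0`,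
and `v - v³/6 ≤ arsinh v ≤ v`. With `v = √H / (2z)` this gives
`√H (1 - H/(24z²)) ≤ z arcosh (1 + H/(2z²)) ≤ √H`, and `H ≤ d ≤ 2εz²` turns the error into `ε/12`.
-/

theorem arcosh_eq_real_arcosh : arcosh = Real.arcosh := rfl

namespace Real

theorem arsinh_le_self_iff {x : ℝ} : arsinh x ≤ x ↔ 0 ≤ x := by
  rw [← sinh_le_sinh, sinh_arsinh, self_le_sinh_iff]

theorem one_sub_sq_div_two_le_inv_sqrt_one_add_sq (x : ℝ) :
    1 - x ^ 2 / 2 ≤ (√(1 + x ^ 2))⁻¹ := by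
  have hpos : 0 < √(1 + x ^ 2) := sqrt_pos.2 (by positivity)
  have hle : √(1 + x ^ 2) ≤ 1 + x ^ 2 / 2 :=
    sqrt_le_iff.2 ⟨by positivity, by nlinarith [sq_nonneg (x ^ 2)]⟩
  have hge : 1 ≤ √(1 + x ^ 2) := one_le_sqrt.2 (by nlinarith [sq_nonneg x])
  rw [← one_div, le_div_iff₀ hpos]
  nlinarith [mul_nonneg (sq_nonneg x) (sub_nonneg.2 hge)]

theorem self_sub_cube_div_six_le_arsinh {x : ℝ} (hx : 0 ≤ x) : x - x ^ 3 / 6 ≤ arsinh x := by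
  have hderiv : ∀ y, HasDerivAt (fun y => arsinh y - (y - y ^ 3 / 6))
      ((√(1 + y ^ 2))⁻¹ - (1 - y ^ 2 / 2)) y := fun y => by
    refine ((hasDerivAt_arsinh y).sub ((hasDerivAt_id' y).sub
      ((hasDerivAt_pow 3 y).div_const 6))).congr_deriv ?_
    push_cast; ring
  have hmono : Monotone fun y => arsinh y - (y - y ^ 3 / 6) :=
    monotone_of_deriv_nonneg (fun y => (hderiv y).differentiableAt) fun y => by
      rw [(hderiv y).deriv]
      exact sub_nonneg.2 (one_sub_sq_div_two_le_inv_sqrt_one_add_sq y)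
  simpa using hmono hx

theorem arcosh_one_add_two_mul_sq {x : ℝ} (hx : 0 ≤ x) :
    arcosh (1 + 2 * x ^ 2) = 2 * arsinh x := by
  have hcosh : 1 + 2 * x ^ 2 = cosh (2 * arsinh x) := by
    rw [cosh_two_mul, cosh_sq', sinh_arsinh]; ring
  rw [hcosh, arcosh_cosh (by simpa [arsinh_nonneg_iff] using hx)]

theorem mul_arcosh_one_add_div_eq {H z : ℝ} (hH : 0 ≤ H) (hz : 0 < z) :
    z * arcosh (1 + H / (2 * z ^ 2)) = 2 * z * arsinh (√H / (2 * z)) := by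
  have hv : H / (2 * z ^ 2) = 2 * (√H / (2 * z)) ^ 2 := by
    rw [div_pow, sq_sqrt hH]; field_simp
  rw [hv, arcosh_one_add_two_mul_sq (by positivity)]
  ring

theorem mul_arcosh_one_add_div_le_sqrt {H z : ℝ} (hH : 0 ≤ H) (hz : 0 < z) :
    z * arcosh (1 + H / (2 * z ^ 2)) ≤ √H := by
  rw [mul_arcosh_one_add_div_eq hH hz]
  calc 2 * z * arsinh (√H / (2 * z)) ≤ 2 * z * (√H / (2 * z)) := by
        gcongr; exact arsinh_le_self_iff.2 (by positivity)
    _ = √H := by field_simp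

theorem sqrt_mul_one_sub_le_mul_arcosh {H z ε : ℝ} (hH : 0 ≤ H) (hz : 0 < z)
    (hHz : H ≤ 2 * ε * z ^ 2) :
    √H * (1 - ε / 12) ≤ z * arcosh (1 + H / (2 * z ^ 2)) := by
  rw [mul_arcosh_one_add_div_eq hH hz]
  have hHε : H / (24 * z ^ 2) ≤ ε / 12 := by
    rw [div_le_iff₀ (by positivity)]; linarith
  calc √H * (1 - ε / 12) ≤ √H * (1 - H / (24 * z ^ 2)) := by gcongr
    _ = 2 * z * (√H / (2 * z) - (√H / (2 * z)) ^ 3 / 6) := by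
        rw [show (√H / (2 * z)) ^ 3 = √H ^ 2 * √H / (2 * z) ^ 3 by ring, sq_sqrt hH]
        field_simp; ring
    _ ≤ 2 * z * arsinh (√H / (2 * z)) := by
        gcongr; exact self_sub_cube_div_six_le_arsinh (by positivity)

end Real

theorem EuclideanSpace.norm_sq_le_card {ι : Type*} [Fintype ι] (x : EuclideanSpace ℝ ι)
    (hx : ∀ i, |x i| ≤ 1) : ‖x‖ ^ 2 ≤ Fintype.card ι := by
  rw [EuclideanSpace.real_norm_sq_eq]
  calc ∑ i, x i ^ 2 ≤ ∑ _i : ι, (1 : ℝ) :=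
        Finset.sum_le_sum fun i _ => (sq_le_one_iff_abs_le_one _).2 (hx i)
    _ = Fintype.card ι := by simp

theorem hamming_embedding_estimate (d : ℕ) (hd : 1 ≤ d) (ε : ℝ) (hε0 : 0 < ε)
    (z : ℝ) (hz : Real.sqrt (d / (2 * ε)) ≤ z)
    (x y : EuclideanSpace ℝ (Fin d)) (hx : ∀ i, x i = 0 ∨ x i = 1)
    (hy : ∀ i, y i = 0 ∨ y i = 1) :
    Real.sqrt (‖x - y‖ ^ 2) * (1 - ε / 12) ≤
        z * arcosh (1 + ‖x - y‖ ^ 2 / (2 * z ^ 2)) ∧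
      z * arcosh (1 + ‖x - y‖ ^ 2 / (2 * z ^ 2)) ≤ Real.sqrt (‖x - y‖ ^ 2) := by
  have hd0 : (0 : ℝ) < d := by exact_mod_cast hd
  have hz0 : 0 < z := (Real.sqrt_pos.2 (by positivity)).trans_le hz
  have hdz : (d : ℝ) ≤ 2 * ε * z ^ 2 := by
    rw [Real.sqrt_le_left hz0.le, div_le_iff₀ (by positivity)] at hz
    linarith
  have hHd : ‖x - y‖ ^ 2 ≤ d := by
    simpa using EuclideanSpace.norm_sq_le_card (x - y) fun i => by
      rcases hx i with hxi | hxi <;> rcases hy i with hyi | hyi <;> simp [hxi, hyi]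
  rw [arcosh_eq_real_arcosh]
  exact ⟨Real.sqrt_mul_one_sub_le_mul_arcosh (sq_nonneg _) hz0 (hHd.trans hdz),
    Real.mul_arcosh_one_add_div_le_sqrt (sq_nonneg _) hz0⟩
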